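/- Contraction proposition. Assume the random Doeblin condition. Fix δ ∈ (0,1) and an integer M ≥ 1, and let A = {ω ∈ Ω : γ_ω ≥ δ and n_ω ≤ M}. Then for ℙ-a.e. ω there exists a probability measure μ_ω on X such that for every n ∈ ℕ, ‖R_{θ^{−n}ω,n} − μ_ω‖_∞ ≤ 2 (1−δ)^{ Σ_{j=1}^{⌊n/M⌋ − 1} 1_A(θ^{−jM}ω) }. -/

import Mathlib

/-!
The backward compositions `K n = R_{θ^{-n}ω,n}` are cut into blocks of length `M`, the `j`-th one
ending at time `-jM`. On a block where the Doeblin condition holds with `γ ≥ δ` and `n_• ≤ M`, the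
block kernel is minorized by `δ m`, so it contracts the total variation distance between any two
probability measures by the factor `1 - δ`; the other blocks do not expand it. Hence `K n' x'` and
`K n x` are `2 (1 - δ)^{c n}`-close whenever `n ≤ n'`, `c n` being the number of good blocks.
If `c` is bounded, `K N x₀` with `c N` maximal serves as `μ_ω`; otherwise the `K n x₀` form a Cauchy
sequence in total variation, whose limit (a uniform setwise limit of probability measures, hence a
probability measure) is `μ_ω`. Shift invariance of `ℙ` makes the Doeblin condition hold almost
surely at all the `θ^{-jM} ω` at once.
-/

open MeasureTheory ProbabilityTheory Filter

noncomputable section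

variable {𝒴 X : Type*} [MeasurableSpace 𝒴] [MeasurableSpace X]

/-- The left shift `θ` on `Ω = 𝒴^ℤ`. -/
def shift (ω : ℤ → 𝒴) : ℤ → 𝒴 := fun n => ω (n + 1)

/-- `θ^{-n} ω`. -/
def shiftBack (n : ℕ) (ω : ℤ → 𝒴) : ℤ → 𝒴 := fun s => ω (s - n)

/-- The σ-algebra `F_S` generated by the coordinate maps `ω ↦ ω s`, `s ∈ S`. -/
def coordSigma (𝒴 : Type*) [m𝒴 : MeasurableSpace 𝒴] (S : Set ℤ) :
    MeasurableSpace (ℤ → 𝒴) :=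
  ⨆ s ∈ S, m𝒴.comap fun ω => ω s

/-- The upper ψ-mixing coefficients `ψ_U(n)`. -/
def psiU (P : Measure (ℤ → 𝒴)) (n : ℕ) : ℝ :=
  sSup { r : ℝ | ∃ k : ℤ, ∃ A B : Set (ℤ → 𝒴),
    MeasurableSet[coordSigma 𝒴 {s | s ≤ k}] A ∧
    MeasurableSet[coordSigma 𝒴 {s | k + n ≤ s}] B ∧
    0 < (P A).toReal * (P B).toReal ∧
    r = (P (A ∩ B)).toReal / ((P A).toReal * (P B).toReal) - 1 }

/-- The `n`-step kernel composition `R_{ω,n} = R_{ω_0} ∘ R_{ω_1} ∘ ⋯ ∘ R_{ω_{n-1}}`. -/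
def Rcomp (R : 𝒴 → Kernel X X) : ℕ → (ℤ → 𝒴) → Kernel X X
  | 0, _ => Kernel.id
  | n + 1, ω => (Rcomp R n (shift ω)) ∘ₖ R (ω 0)

/-- `‖κ − μ‖_∞`: the supremum over measurable `g` with `sup|g| ≤ 1` and over `x`
of `|κ g (x) − μ(g)|`. -/
def opDist (κ : Kernel X X) (μ : Measure X) : ℝ :=
  sSup { r : ℝ | ∃ g : X → ℝ, Measurable g ∧ (∀ x, |g x| ≤ 1) ∧
    ∃ x : X, r = |(∫ y, g y ∂(κ x)) - ∫ y, g y ∂μ| }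

/-- The random Doeblin condition: ℙ-a.s.,
`R_{θ^{-n_ω}ω, n_ω}(x, Γ) ≥ γ_ω m_ω(Γ)` for all `x` and all measurable `Γ`. -/
def Doeblin (P : Measure (ℤ → 𝒴)) (R : 𝒴 → Kernel X X)
    (nD : (ℤ → 𝒴) → ℕ) (γ : (ℤ → 𝒴) → ℝ) (m : (ℤ → 𝒴) → Measure X) : Prop :=
  ∀ᵐ ω ∂P, ∀ x : X, ∀ Γ : Set X, MeasurableSet Γ →
    ENNReal.ofReal (γ ω) * m ω Γ ≤ Rcomp R (nD ω) (shiftBack (nD ω) ω) x Γ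

/-- Equivariance `(R_ω)^* μ_ω = μ_{θ ω}`, ℙ-a.s. -/
def Equivariant (P : Measure (ℤ → 𝒴)) (R : 𝒴 → Kernel X X)
    (μ : (ℤ → 𝒴) → Measure X) : Prop :=
  ∀ᵐ ω ∂P, ∀ Γ : Set X, MeasurableSet Γ →
    μ (shift ω) Γ = ∫⁻ x, R (ω 0) x Γ ∂(μ ω)

/-- The effective geometric ergodicity rates for a given random variable `K` and
exponent `p`: ℙ-a.s., for all `n`,
`max(‖R_{θ^{-n}ω,n} − μ_ω‖_∞, ‖R_{ω,n} − μ_{θ^n ω}‖_∞) ≤ K(ω) ρ^{n/p}`. -/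
def RateFor (P : Measure (ℤ → 𝒴)) (R : 𝒴 → Kernel X X)
    (μ : (ℤ → 𝒴) → Measure X) (ρ p : ℝ) (K : (ℤ → 𝒴) → ℝ) : Prop :=
  ∀ᵐ ω ∂P, ∀ n : ℕ,
    max (opDist (Rcomp R n (shiftBack n ω)) (μ ω))
        (opDist (Rcomp R n ω) (μ (shift^[n] ω))) ≤ K ω * ρ ^ ((n : ℝ) / p)

/-- Effective rates: for every finite `p ≥ 1` there is `K_p ∈ L^p(ℙ)`
realizing the exponential rates with exponent `ρ^{n/p}`. -/
def EffectiveRates (P : Measure (ℤ → 𝒴)) (R : 𝒴 → Kernel X X)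
    (μ : (ℤ → 𝒴) → Measure X) (ρ : ℝ) : Prop :=
  ∀ p : ℝ, 1 ≤ p → ∃ K : (ℤ → 𝒴) → ℝ,
    MemLp K (ENNReal.ofReal p) P ∧ RateFor P R μ ρ p K

set_option linter.unusedSectionVars false

open Topology

lemma shift_iterate_apply (k : ℕ) (ω : ℤ → 𝒴) (s : ℤ) : shift^[k] ω s = ω (s + k) := by
  induction k generalizing ω with
  | zero => simp
  | succ k ih => rw [Function.iterate_succ_apply, ih, shift]; push_cast; ring_nf

lemma shift_iterate_shiftBack_add (a b : ℕ) (ω : ℤ → 𝒴) :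
    shift^[b] (shiftBack (a + b) ω) = shiftBack a ω := by
  funext s
  rw [shift_iterate_apply, shiftBack, shiftBack]
  push_cast
  ring_nf

lemma shiftBack_shiftBack (a b : ℕ) (ω : ℤ → 𝒴) :
    shiftBack a (shiftBack b ω) = shiftBack (a + b) ω := by
  funext s
  simp only [shiftBack]
  push_cast
  ring_nf

def shiftEquiv : (ℤ → 𝒴) ≃ᵐ (ℤ → 𝒴) where
  toFun := shift
  invFun := shiftBack 1
  left_inv ω := by funext s; simp [shift, shiftBack]
  right_inv ω := by funext s; simp [shift, shiftBack]
  measurable_toFun := measurable_pi_lambda _ fun s => measurable_pi_apply (s + 1)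
  measurable_invFun := measurable_pi_lambda _ fun s => measurable_pi_apply (s - 1)

lemma shiftBack_eq_iterate (k : ℕ) :
    (shiftBack k : (ℤ → 𝒴) → ℤ → 𝒴) = (shiftEquiv (𝒴 := 𝒴)).symm^[k] := by
  induction k with
  | zero => funext ω s; simp [shiftBack]
  | succ k ih =>
    funext ω
    rw [Function.iterate_succ_apply', ← ih, add_comm, ← shiftBack_shiftBack]
    rfl

lemma measurePreserving_shiftBack {P : Measure (ℤ → 𝒴)} (h : MeasurePreserving shift P P)
    (k : ℕ) : MeasurePreserving (shiftBack k) P P := by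
  rw [shiftBack_eq_iterate]
  exact (MeasurePreserving.symm shiftEquiv h).iterate k

lemma ae_forall_shiftBack {P : Measure (ℤ → 𝒴)} (h : MeasurePreserving shift P P)
    {p : (ℤ → 𝒴) → Prop} (hp : ∀ᵐ ω ∂P, p ω) : ∀ᵐ ω ∂P, ∀ k, p (shiftBack k ω) :=
  ae_all_iff.2 fun k => (measurePreserving_shiftBack h k).quasiMeasurePreserving.ae hp

instance instIsMarkovKernelRcomp (R : 𝒴 → Kernel X X) [∀ y, IsMarkovKernel (R y)] :
    ∀ n ω, IsMarkovKernel (Rcomp R n ω)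
  | 0, _ => by rw [Rcomp]; infer_instance
  | n + 1, ω => by
    have := instIsMarkovKernelRcomp R n (shift ω)
    rw [Rcomp]
    infer_instance

lemma Rcomp_add (R : 𝒴 → Kernel X X) (a : ℕ) :
    ∀ b ω, Rcomp R (a + b) ω = Rcomp R a (shift^[b] ω) ∘ₖ Rcomp R b ω
  | 0, ω => by simp [Rcomp, Kernel.comp_id]
  | b + 1, ω => by
    rw [← add_assoc, Rcomp, Rcomp_add R a b, Rcomp, Kernel.comp_assoc,
      Function.iterate_succ_apply]

lemma Rcomp_shiftBack_add (R : 𝒴 → Kernel X X) (a b : ℕ) (ω : ℤ → 𝒴) :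
    Rcomp R (a + b) (shiftBack (a + b) ω) =
      Rcomp R a (shiftBack a ω) ∘ₖ Rcomp R b (shiftBack (a + b) ω) := by
  rw [Rcomp_add, shift_iterate_shiftBack_add]

lemma Rcomp_shiftBack_of_le (R : 𝒴 → Kernel X X) {a n : ℕ} (h : a ≤ n) (ω : ℤ → 𝒴) :
    Rcomp R n (shiftBack n ω) =
      Rcomp R a (shiftBack a ω) ∘ₖ Rcomp R (n - a) (shiftBack n ω) := by
  obtain ⟨b, rfl⟩ := Nat.exists_eq_add_of_le h
  rw [Nat.add_sub_cancel_left, Rcomp_shiftBack_add]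

section TotalVariation

variable {p q r : Measure X}

lemma abs_integral_le_one [IsProbabilityMeasure p] {g : X → ℝ} (hg : ∀ x, |g x| ≤ 1) :
    |∫ x, g x ∂p| ≤ 1 := by
  simpa using norm_integral_le_of_norm_le_const (μ := p) (f := g) (ae_of_all _ hg)

lemma integrable_of_abs_le [IsFiniteMeasure p] {g : X → ℝ} (hg : Measurable g) {C : ℝ}
    (hC : ∀ x, |g x| ≤ C) : Integrable g p :=
  .of_bound hg.aestronglyMeasurable C (ae_of_all _ hC)

lemma integral_mul_add_const [IsProbabilityMeasure p] {g : X → ℝ} (hg : Integrable g p)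
    (a c : ℝ) : ∫ x, (a * g x + c) ∂p = a * ∫ x, g x ∂p + c := by
  rw [integral_add (hg.const_mul a) (integrable_const c), integral_const_mul]
  simp

lemma integral_comp_measure [IsProbabilityMeasure p] (κ : Kernel X X) [IsMarkovKernel κ]
    {g : X → ℝ} (hg : Measurable g) (hg1 : ∀ x, |g x| ≤ 1) :
    ∫ y, g y ∂(κ ∘ₘ p) = ∫ x, ∫ y, g y ∂κ x ∂p := by
  rw [Measure.comp_eq_comp_const_apply, Kernel.integral_comp (integrable_of_abs_le hg hg1)]
  rfl

/-- `‖p - q‖ ≤ ε` in the normalization of `opDist`: twice the total variation distance. -/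
def TVDistLE (p q : Measure X) (ε : ℝ) : Prop :=
  ∀ g : X → ℝ, Measurable g → (∀ x, |g x| ≤ 1) → |∫ x, g x ∂p - ∫ x, g x ∂q| ≤ ε

lemma tvDistLE_two (p q : Measure X) [IsProbabilityMeasure p] [IsProbabilityMeasure q] :
    TVDistLE p q 2 := fun g _ hg1 => by
  have hp : |∫ x, g x ∂p| ≤ 1 := abs_integral_le_one hg1
  have hq : |∫ x, g x ∂q| ≤ 1 := abs_integral_le_one hg1
  linarith [abs_sub (∫ x, g x ∂p) (∫ x, g x ∂q)]

namespace TVDistLE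

variable {ε ε' : ℝ}

lemma nonneg (h : TVDistLE p q ε) : 0 ≤ ε := by
  simpa using h 0 measurable_const (by simp)

lemma symm (h : TVDistLE p q ε) : TVDistLE q p ε := fun g hg hg1 => by
  rw [abs_sub_comm]; exact h g hg hg1

lemma trans (h : TVDistLE p r ε) (h' : TVDistLE r q ε') : TVDistLE p q (ε + ε') :=
  fun g hg hg1 => (abs_sub_le _ _ _).trans (add_le_add (h g hg hg1) (h' g hg hg1))

lemma of_tendsto {ν : ℕ → Measure X} {b : ℕ → ℝ} (hb : Tendsto b atTop (𝓝 0))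
    (hp : ∀ᶠ k in atTop, TVDistLE p (ν k) ε) (hq : ∀ k, TVDistLE (ν k) q (b k)) :
    TVDistLE p q ε := fun g hg hg1 =>
  ge_of_tendsto (by simpa using tendsto_const_nhds.add hb)
    (hp.mono fun k hk => (hk.trans (hq k)) g hg hg1)

lemma abs_measureReal_sub_le [IsProbabilityMeasure p] [IsProbabilityMeasure q]
    (h : TVDistLE p q ε) {Γ : Set X} (hΓ : MeasurableSet Γ) :
    |p.real Γ - q.real Γ| ≤ ε := by
  have := h (Γ.indicator 1) (measurable_one.indicator hΓ) fun x => by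
    by_cases hx : x ∈ Γ <;> simp [hx]
  rwa [integral_indicator_one hΓ, integral_indicator_one hΓ] at this

lemma comp [IsProbabilityMeasure p] [IsProbabilityMeasure q] (κ : Kernel X X)
    [IsMarkovKernel κ] (h : TVDistLE p q ε) : TVDistLE (κ ∘ₘ p) (κ ∘ₘ q) ε := by
  intro g hg hg1
  rw [integral_comp_measure κ hg hg1, integral_comp_measure κ hg hg1]
  exact h _ (hg.stronglyMeasurable.integral_kernel.measurable) fun x => abs_integral_le_one hg1

end TVDistLE

lemma opDist_le [Nonempty X] {κ : Kernel X X} {μ : Measure X} {ε : ℝ}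
    (h : ∀ x, TVDistLE (κ x) μ ε) : opDist κ μ ≤ ε :=
  Real.sSup_le (by rintro r ⟨g, hg, hg1, x, rfl⟩; exact h x g hg hg1)
    (h (Classical.arbitrary X)).nonneg

end TotalVariation

section Minorization

def IsMinorizedBy (κ : Kernel X X) (δ : ℝ) : Prop :=
  ∃ m : Measure X, IsProbabilityMeasure m ∧
    ∀ x Γ, MeasurableSet Γ → ENNReal.ofReal δ * m Γ ≤ κ x Γ

lemma IsMinorizedBy.mono {κ : Kernel X X} {δ δ' : ℝ} (h : IsMinorizedBy κ δ') (hδ : δ ≤ δ') :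
    IsMinorizedBy κ δ := by
  obtain ⟨m, hm, hκ⟩ := h
  exact ⟨m, hm, fun x Γ hΓ =>
    (mul_le_mul_left (ENNReal.ofReal_le_ofReal hδ) _).trans (hκ x Γ hΓ)⟩

lemma IsMinorizedBy.comp {κ η : Kernel X X} [IsMarkovKernel κ] {δ : ℝ}
    (h : IsMinorizedBy η δ) : IsMinorizedBy (η ∘ₖ κ) δ := by
  obtain ⟨m, hm, hη⟩ := h
  refine ⟨m, hm, fun x Γ hΓ => ?_⟩
  rw [Kernel.comp_apply' _ _ _ hΓ]
  calc ENNReal.ofReal δ * m Γ = ∫⁻ _, ENNReal.ofReal δ * m Γ ∂κ x := by simp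
    _ ≤ ∫⁻ y, η y Γ ∂κ x := lintegral_mono fun y => hη y Γ hΓ

variable {p q : Measure X} {δ ε : ℝ}

lemma mul_integral_le_integral_of_smul_le [IsProbabilityMeasure q] {m : Measure X}
    (hδ : 0 ≤ δ) (hm : ∀ Γ, MeasurableSet Γ → ENNReal.ofReal δ * m Γ ≤ q Γ) {f : X → ℝ}
    (hf : Integrable f q) (hf0 : ∀ x, 0 ≤ f x) : δ * ∫ x, f x ∂m ≤ ∫ x, f x ∂q := by
  have hle : ENNReal.ofReal δ • m ≤ q := Measure.le_iff.2 hm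
  calc δ * ∫ x, f x ∂m = ∫ x, f x ∂(ENNReal.ofReal δ • m) := by
        rw [integral_smul_measure, ENNReal.toReal_ofReal hδ, smul_eq_mul]
    _ ≤ ∫ x, f x ∂q := integral_mono_measure hle (ae_of_all _ hf0) hf

/-- `q - δ m` is a measure of mass `1 - δ`. -/
lemma abs_integral_sub_smul_le [IsProbabilityMeasure q] {m : Measure X}
    [IsProbabilityMeasure m] (hδ : 0 ≤ δ)
    (hm : ∀ Γ, MeasurableSet Γ → ENNReal.ofReal δ * m Γ ≤ q Γ) {g : X → ℝ} (hg : Measurable g)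
    (hg1 : ∀ x, |g x| ≤ 1) : |∫ x, g x ∂q - δ * ∫ x, g x ∂m| ≤ 1 - δ := by
  have hb x : -1 ≤ g x ∧ g x ≤ 1 := abs_le.1 (hg1 x)
  have hq : Integrable g q := integrable_of_abs_le hg hg1
  have hm' : Integrable g m := integrable_of_abs_le hg hg1
  have hsub : δ * ∫ x, (-1 * g x + 1) ∂m ≤ ∫ x, (-1 * g x + 1) ∂q :=
    mul_integral_le_integral_of_smul_le hδ hm ((hq.const_mul (-1)).add (integrable_const 1))
      fun x => by linarith [hb x]
  have hadd : δ * ∫ x, (1 * g x + 1) ∂m ≤ ∫ x, (1 * g x + 1) ∂q :=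
    mul_integral_le_integral_of_smul_le hδ hm ((hq.const_mul 1).add (integrable_const 1))
      fun x => by linarith [hb x]
  rw [integral_mul_add_const hq, integral_mul_add_const hm'] at hsub hadd
  rw [abs_le]
  constructor <;> linarith

lemma TVDistLE.comp_of_isMinorizedBy [IsProbabilityMeasure p] [IsProbabilityMeasure q]
    {κ : Kernel X X} [IsMarkovKernel κ] (hδ0 : 0 ≤ δ) (hδ1 : δ < 1) (hκ : IsMinorizedBy κ δ)
    (h : TVDistLE p q ε) : TVDistLE (κ ∘ₘ p) (κ ∘ₘ q) ((1 - δ) * ε) := by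
  obtain ⟨m, hm, hκm⟩ := hκ
  intro g hg hg1
  rw [integral_comp_measure κ hg hg1, integral_comp_measure κ hg hg1]
  set F : X → ℝ := fun x => ∫ y, g y ∂κ x
  have hF : Measurable F := hg.stronglyMeasurable.integral_kernel.measurable
  have hFint {μ : Measure X} [IsProbabilityMeasure μ] : Integrable F μ :=
    integrable_of_abs_le hF fun x => abs_integral_le_one hg1
  -- Subtracting the common part `δ m` of all the `κ x` and rescaling keeps `F` in `[-1, 1]`.
  set c : ℝ := δ * ∫ y, g y ∂m
  have hpos : 0 < 1 - δ := by linarith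
  have hG := h (fun x => (1 - δ)⁻¹ * F x + -(1 - δ)⁻¹ * c)
    ((hF.const_mul _).add measurable_const) fun x => by
      rw [neg_mul, ← sub_eq_add_neg, ← mul_sub, abs_mul, abs_inv, abs_of_pos hpos,
        inv_mul_le_iff₀ hpos, mul_one]
      exact abs_integral_sub_smul_le hδ0 (hκm x) hg hg1
  rw [integral_mul_add_const hFint, integral_mul_add_const hFint, add_sub_add_right_eq_sub,
    ← mul_sub, abs_mul, abs_inv, abs_of_pos hpos, inv_mul_le_iff₀ hpos] at hG
  exact hG

end Minorization

lemma TVDistLE.comp_chain {κ K : ℕ → Kernel X X} [∀ j, IsMarkovKernel (κ j)]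
    (hK0 : K 0 = Kernel.id) (hK : ∀ j, K (j + 1) = K j ∘ₖ κ j) {δ : ℝ} (hδ0 : 0 ≤ δ)
    (hδ1 : δ < 1) {A : ℕ → Prop} [DecidablePred A] (hA : ∀ j, A j → IsMinorizedBy (κ j) δ) :
    ∀ (n : ℕ) {p q : Measure X} [IsProbabilityMeasure p] [IsProbabilityMeasure q] {ε : ℝ},
      TVDistLE p q ε →
      TVDistLE (K n ∘ₘ p) (K n ∘ₘ q) (ε * (1 - δ) ^ ((Finset.range n).filter A).card)
  | 0, p, q, _, _, ε, h => by simpa [hK0] using h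
  | n + 1, p, q, _, _, ε, h => by
    rw [hK, ← Measure.comp_assoc, ← Measure.comp_assoc, Finset.range_add_one,
      Finset.filter_insert]
    by_cases hn : A n
    · have := TVDistLE.comp_chain hK0 hK hδ0 hδ1 hA n
        (h.comp_of_isMinorizedBy hδ0 hδ1 (hA n hn))
      rw [if_pos hn, Finset.card_insert_of_notMem (by simp), pow_succ]
      convert this using 1
      ring
    · rw [if_neg hn]
      exact TVDistLE.comp_chain hK0 hK hδ0 hδ1 hA n (h.comp (κ n))

section Blocks

variable (R : 𝒴 → Kernel X X) [∀ y, IsMarkovKernel (R y)] (ω : ℤ → 𝒴)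

lemma isMinorizedBy_Rcomp_shiftBack_of_le {a N : ℕ} (h : a ≤ N) {δ : ℝ}
    (hmin : IsMinorizedBy (Rcomp R a (shiftBack a ω)) δ) :
    IsMinorizedBy (Rcomp R N (shiftBack N ω)) δ := by
  rw [Rcomp_shiftBack_of_le R h]
  exact hmin.comp

/-- The past is cut into blocks of length `M`, the `j`-th one ending at time `-jM`. -/
lemma tvDistLE_Rcomp_shiftBack (M : ℕ) {δ : ℝ} (hδ0 : 0 ≤ δ) (hδ1 : δ < 1)
    {A : ℕ → Prop} [DecidablePred A]
    (hA : ∀ j, A j → IsMinorizedBy (Rcomp R M (shiftBack M (shiftBack (j * M) ω))) δ)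
    {n n' : ℕ} (hn : n ≤ n') (x x' : X) :
    TVDistLE (Rcomp R n' (shiftBack n' ω) x') (Rcomp R n (shiftBack n ω) x)
      (2 * (1 - δ) ^ ((Finset.range (n / M)).filter A).card) := by
  set K : ℕ → Kernel X X := fun j => Rcomp R (j * M) (shiftBack (j * M) ω)
  have hK : ∀ j, K (j + 1) = K j ∘ₖ Rcomp R M (shiftBack M (shiftBack (j * M) ω)) := by
    intro j
    simp only [K]
    rw [add_mul, one_mul, Rcomp_shiftBack_add, shiftBack_shiftBack, add_comm M]
  have hsplit : Rcomp R n (shiftBack n ω) =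
      K (n / M) ∘ₖ Rcomp R (n - n / M * M) (shiftBack n ω) :=
    Rcomp_shiftBack_of_le R (Nat.div_mul_le_self n M) ω
  rw [Rcomp_shiftBack_of_le R hn, Kernel.comp_apply, hsplit, Kernel.comp_apply,
    ← Measure.comp_assoc, mul_comm]
  exact TVDistLE.comp_chain (by simp [K, Rcomp]) hK hδ0 hδ1 hA (n / M) (tvDistLE_two _ _)

end Blocks

section Completeness

variable {p q : Measure X} {ε : ℝ}

lemma integral_eq_integral_Ioc_measureReal [IsProbabilityMeasure p] {f : X → ℝ}
    (hf : Measurable f) (hf0 : ∀ x, 0 ≤ f x) (hf1 : ∀ x, f x ≤ 1) :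
    ∫ x, f x ∂p = ∫ t in Set.Ioc 0 1, p.real {x | t < f x} := by
  rw [(integrable_of_abs_le hf fun x => (abs_of_nonneg (hf0 x)).trans_le (hf1 x)
    ).integral_eq_integral_meas_lt (ae_of_all _ hf0)]
  refine setIntegral_eq_of_subset_of_forall_sdiff_eq_zero measurableSet_Ioi
    Set.Ioc_subset_Ioi_self fun t ht => ?_
  have ht1 : 1 < t := by simp_all
  have : {x | t < f x} = ∅ :=
    Set.eq_empty_of_forall_notMem fun x hx => (hf1 x).not_gt (ht1.trans hx)
  simp [this]

lemma integrableOn_Ioc_measureReal [IsFiniteMeasure p] (f : X → ℝ) :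
    IntegrableOn (fun t => p.real {x | t < f x}) (Set.Ioc 0 1) := by
  have hanti : Antitone fun t => p.real {x | t < f x} := fun t t' htt' =>
    measureReal_mono fun x hx => lt_of_le_of_lt htt' hx
  refine Measure.integrableOn_of_bounded (M := p.real Set.univ)
    (measure_Ioc_lt_top (μ := volume)).ne
    hanti.measurable.aestronglyMeasurable (ae_of_all _ fun t => ?_)
  rw [Real.norm_of_nonneg measureReal_nonneg]
  exact measureReal_mono (Set.subset_univ _)

lemma abs_integral_sub_le_of_abs_measureReal_sub_le [IsProbabilityMeasure p]
    [IsProbabilityMeasure q] (h : ∀ Γ, MeasurableSet Γ → |p.real Γ - q.real Γ| ≤ ε)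
    {f : X → ℝ} (hf : Measurable f) (hf0 : ∀ x, 0 ≤ f x) (hf1 : ∀ x, f x ≤ 1) :
    |∫ x, f x ∂p - ∫ x, f x ∂q| ≤ ε := by
  rw [integral_eq_integral_Ioc_measureReal hf hf0 hf1,
    integral_eq_integral_Ioc_measureReal hf hf0 hf1,
    ← integral_sub (integrableOn_Ioc_measureReal f) (integrableOn_Ioc_measureReal f)]
  calc ‖∫ t in Set.Ioc 0 1, (p.real {x | t < f x} - q.real {x | t < f x})‖
      ≤ ε * volume.real (Set.Ioc (0 : ℝ) 1) := norm_setIntegral_le_of_norm_le_const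
        measure_Ioc_lt_top fun t _ => h _ (measurableSet_lt measurable_const hf)
    _ = ε := by simp

lemma TVDistLE.of_abs_measureReal_sub_le [IsProbabilityMeasure p] [IsProbabilityMeasure q]
    (h : ∀ Γ, MeasurableSet Γ → |p.real Γ - q.real Γ| ≤ ε) : TVDistLE p q (2 * ε) := by
  intro g hg hg1
  have hb x : -1 ≤ g x ∧ g x ≤ 1 := abs_le.1 (hg1 x)
  have := abs_integral_sub_le_of_abs_measureReal_sub_le h (f := fun x => 2⁻¹ * g x + 2⁻¹)
    ((hg.const_mul _).add measurable_const) (fun x => by linarith [hb x])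
    fun x => by linarith [hb x]
  rw [integral_mul_add_const (integrable_of_abs_le hg hg1),
    integral_mul_add_const (integrable_of_abs_le hg hg1), add_sub_add_right_eq_sub, ← mul_sub,
    abs_mul, abs_of_pos (by norm_num)] at this
  linarith

/-- Countable additivity comes from continuity at `∅`, inherited uniformly from the `ν k`. -/
lemma exists_isProbabilityMeasure_measureReal_eq (ν : ℕ → Measure X)
    [∀ k, IsProbabilityMeasure (ν k)] {b : ℕ → ℝ} (hb : Tendsto b atTop (𝓝 0))
    (ℓ : Set X → ℝ) (hℓ : ∀ Γ, MeasurableSet Γ → ∀ k, |(ν k).real Γ - ℓ Γ| ≤ b k) :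
    ∃ μ : Measure X, IsProbabilityMeasure μ ∧ ∀ Γ, MeasurableSet Γ → μ.real Γ = ℓ Γ := by
  have hlim {Γ} (hΓ : MeasurableSet Γ) : Tendsto (fun k => (ν k).real Γ) atTop (𝓝 (ℓ Γ)) :=
    tendsto_iff_dist_tendsto_zero.2 <| squeeze_zero (fun _ => dist_nonneg)
      (fun k => (Real.dist_eq _ _).trans_le (hℓ Γ hΓ k)) hb
  have hnonneg {Γ} (hΓ : MeasurableSet Γ) : 0 ≤ ℓ Γ :=
    ge_of_tendsto' (hlim hΓ) fun _ => measureReal_nonneg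
  have hempty : ℓ ∅ = 0 := tendsto_nhds_unique (hlim .empty) (by simp)
  have huniv : ℓ Set.univ = 1 := tendsto_nhds_unique (hlim .univ) (by simp)
  have hunion {s t : Set X} (hs : MeasurableSet s) (ht : MeasurableSet t) (hst : Disjoint s t) :
      ℓ (s ∪ t) = ℓ s + ℓ t :=
    tendsto_nhds_unique (hlim (hs.union ht)) <| ((hlim hs).add (hlim ht)).congr fun k =>
      (measureReal_union hst ht).symm
  have hcont {s : ℕ → Set X} (hs : ∀ n, MeasurableSet (s n)) (hanti : Antitone s)
      (hinter : ⋂ n, s n = ∅) : Tendsto (fun n => ℓ (s n)) atTop (𝓝 0) := by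
    refine tendsto_order.2 ⟨fun a ha => .of_forall fun n => ha.trans_le (hnonneg (hs n)),
      fun a ha => ?_⟩
    obtain ⟨k, hk⟩ := (hb.eventually (gt_mem_nhds (half_pos ha))).exists
    have hνk : Tendsto (fun n => (ν k).real (s n)) atTop (𝓝 0) := by
      have := tendsto_measure_iInter_atTop (μ := ν k) (fun n => (hs n).nullMeasurableSet) hanti
        ⟨0, measure_ne_top _ _⟩
      rw [hinter, measure_empty] at this
      exact (ENNReal.tendsto_toReal ENNReal.zero_ne_top).comp this
    filter_upwards [hνk.eventually (gt_mem_nhds (half_pos ha))] with n hn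
    linarith [(abs_le.1 (hℓ _ (hs n) k)).1]
  have hC : IsSetRing {s : Set X | MeasurableSet s} :=
    ⟨.empty, fun _ _ hs ht => hs.union ht, fun _ _ hs ht => hs.diff ht⟩
  let m := hC.addContent_of_union (fun s => ENNReal.ofReal (ℓ s)) (by simp [hempty])
    fun hs ht hst => by rw [hunion hs ht hst, ENNReal.ofReal_add (hnonneg hs) (hnonneg ht)]
  let μ : Measure X := .ofMeasurable (fun s _ => ENNReal.ofReal (ℓ s)) (by simp [hempty])
    fun f hf hdisj => addContent_iUnion_eq_sum_of_tendsto_zero hC m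
      (fun _ _ => ENNReal.ofReal_ne_top)
      (fun s hs hanti hinter => (by simpa using ENNReal.tendsto_ofReal (hcont hs hanti hinter) :
        Tendsto (fun n => ENNReal.ofReal (ℓ (s n))) atTop (𝓝 0))) hf (.iUnion hf) hdisj
  have hμ {Γ} (hΓ : MeasurableSet Γ) : μ Γ = ENNReal.ofReal (ℓ Γ) :=
    Measure.ofMeasurable_apply Γ hΓ
  exact ⟨μ, ⟨by rw [hμ .univ, huniv, ENNReal.ofReal_one]⟩, fun Γ hΓ => by
    rw [measureReal_def, hμ hΓ, ENNReal.toReal_ofReal (hnonneg hΓ)]⟩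

lemma exists_forall_tvDistLE_of_cauchy (ν : ℕ → Measure X) [∀ k, IsProbabilityMeasure (ν k)]
    {b : ℕ → ℝ} (hb : Tendsto b atTop (𝓝 0)) (hν : ∀ k k', k ≤ k' → TVDistLE (ν k') (ν k) (b k)) :
    ∃ μ : Measure X, IsProbabilityMeasure μ ∧ ∀ k, TVDistLE (ν k) μ (2 * b k) := by
  have hcauchy {Γ} (hΓ : MeasurableSet Γ) : CauchySeq fun k => (ν k).real Γ := by
    refine cauchySeq_of_le_tendsto_0 (fun k => 2 * b k) (fun k k' N hk hk' => ?_)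
      (by simpa using hb.const_mul 2)
    rw [Real.dist_eq]
    linarith [abs_sub_le ((ν k).real Γ) ((ν N).real Γ) ((ν k').real Γ),
      (hν N k hk).abs_measureReal_sub_le hΓ, (hν N k' hk').symm.abs_measureReal_sub_le hΓ]
  choose! ℓ hℓ using fun Γ (hΓ : MeasurableSet Γ) => cauchySeq_tendsto_of_complete (hcauchy hΓ)
  have hbound {Γ} (hΓ : MeasurableSet Γ) (k : ℕ) : |(ν k).real Γ - ℓ Γ| ≤ b k := by
    rw [abs_sub_comm]
    exact le_of_tendsto (((hℓ Γ hΓ).sub tendsto_const_nhds).abs)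
      (eventually_atTop.2 ⟨k, fun k' hk' => (hν k k' hk').abs_measureReal_sub_le hΓ⟩)
  obtain ⟨μ, hμ, hμℓ⟩ := exists_isProbabilityMeasure_measureReal_eq ν hb ℓ
    fun Γ hΓ => hbound hΓ
  exact ⟨μ, hμ, fun k => .of_abs_measureReal_sub_le fun Γ hΓ => hμℓ Γ hΓ ▸ hbound hΓ k⟩

end Completeness

/-- With `c` nondecreasing, either `c` is bounded and the measure is `K N x₀` for `c` maximal at
`N`, or `2 r ^ c n → 0` and the measure is the limit of the `K n x₀`. -/
lemma exists_forall_tvDistLE_of_monotone [Nonempty X] (K : ℕ → Kernel X X)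
    [∀ n, IsMarkovKernel (K n)] {r : ℝ} (hr0 : 0 ≤ r) (hr1 : r < 1) {c : ℕ → ℕ}
    (hc : Monotone c) (hK : ∀ n n', n ≤ n' → ∀ x x', TVDistLE (K n' x') (K n x) (2 * r ^ c n)) :
    ∃ μ : Measure X, IsProbabilityMeasure μ ∧ ∀ n x, TVDistLE (K n x) μ (2 * r ^ c n) := by
  obtain ⟨x₀⟩ := ‹Nonempty X›
  by_cases hbdd : BddAbove (Set.range c)
  · obtain ⟨N, hN⟩ : ∃ N, c N = sSup (Set.range c) := Nat.sSup_mem (Set.range_nonempty c) hbdd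
    refine ⟨K N x₀, inferInstance, fun n x => ?_⟩
    rcases le_total n N with hn | hn
    · exact (hK n N hn x x₀).symm
    · rw [le_antisymm (hN ▸ le_csSup hbdd ⟨n, rfl⟩) (hc hn)]
      exact hK N n hn x₀ x
  · have hctop : Tendsto c atTop atTop := tendsto_atTop_atTop_of_monotone hc fun b => by
      obtain ⟨_, ⟨n, rfl⟩, hn⟩ := not_bddAbove_iff.1 hbdd b
      exact ⟨n, hn.le⟩
    have hb : Tendsto (fun n => 2 * r ^ c n) atTop (𝓝 0) := by
      simpa using ((tendsto_pow_atTop_nhds_zero_of_lt_one hr0 hr1).comp hctop).const_mul 2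
    obtain ⟨μ, hμ, hlim⟩ := exists_forall_tvDistLE_of_cauchy (fun k => K k x₀) hb
      fun k k' hk => hK k k' hk x₀ x₀
    exact ⟨μ, hμ, fun n x => .of_tendsto (by simpa using hb.const_mul 2)
      (eventually_atTop.2 ⟨n, fun k hk => (hK n k hk x x₀).symm⟩) hlim⟩

theorem contraction_proposition_general
    (P : Measure (ℤ → 𝒴))
    (herg : Ergodic shift P)
    (R : 𝒴 → Kernel X X) [∀ y, IsMarkovKernel (R y)]
    (nD : (ℤ → 𝒴) → ℕ) (γ : (ℤ → 𝒴) → ℝ) (m : (ℤ → 𝒴) → Measure X)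
    (hmprob : ∀ ω, IsProbabilityMeasure (m ω))
    (hDoeb : Doeblin P R nD γ m)
    (δ : ℝ) (hδ : δ ∈ Set.Ioo (0 : ℝ) 1) (M : ℕ) :
    ∀ᵐ ω ∂P, ∃ μω : Measure X, IsProbabilityMeasure μω ∧
      ∀ n : ℕ, opDist (Rcomp R n (shiftBack n ω)) μω ≤
        2 * (1 - δ) ^
          (((Finset.Icc 1 (n / M - 1)).filter fun j =>
            δ ≤ γ (shiftBack (j * M) ω) ∧ nD (shiftBack (j * M) ω) ≤ M).card) := by
  filter_upwards [ae_forall_shiftBack herg.toMeasurePreserving hDoeb] with ω hω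
  have : Nonempty X := nonempty_of_isProbabilityMeasure (m ω)
  let A j := 1 ≤ j ∧ δ ≤ γ (shiftBack (j * M) ω) ∧ nD (shiftBack (j * M) ω) ≤ M
  have hA j : A j → IsMinorizedBy (Rcomp R M (shiftBack M (shiftBack (j * M) ω))) δ :=
    fun ⟨_, hγ, hn⟩ => (isMinorizedBy_Rcomp_shiftBack_of_le R _ hn
      ⟨m _, hmprob _, hω (j * M)⟩).mono hγ
  have hcount n : ((Finset.Icc 1 (n / M - 1)).filter fun j =>
      δ ≤ γ (shiftBack (j * M) ω) ∧ nD (shiftBack (j * M) ω) ≤ M) =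
      (Finset.range (n / M)).filter A := by
    ext j
    simp only [Finset.mem_filter, Finset.mem_Icc, Finset.mem_range, A]
    constructor
    · rintro ⟨⟨h1, h2⟩, h3⟩
      exact ⟨by omega, h1, h3⟩
    · rintro ⟨h1, h2, h3⟩
      exact ⟨⟨h2, by omega⟩, h3⟩
  obtain ⟨μ, hμ, hμK⟩ := exists_forall_tvDistLE_of_monotone (fun n => Rcomp R n (shiftBack n ω))
    (sub_nonneg.2 hδ.2.le) (sub_lt_self 1 hδ.1)
    (fun n n' h => Finset.card_le_card (Finset.filter_subset_filter _
      (Finset.range_subset_range.2 (Nat.div_le_div_right h))))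
    fun n n' hn x x' => tvDistLE_Rcomp_shiftBack R ω M hδ.1.le hδ.2 hA hn x x'
  exact ⟨μ, hμ, fun n => hcount n ▸ opDist_le (hμK n)⟩

/-- **Contraction proposition** (Proposition 3.2). Under the random Doeblin condition,
with `A = {ω : γ_ω ≥ δ, n_ω ≤ M}`, for `ℙ`-a.e. `ω` there is a probability measure
`μ_ω` such that for every `n`,
`‖R_{θ^{-n}ω,n} − μ_ω‖_∞ ≤ 2 (1-δ)^{Σ_{j=1}^{⌊n/M⌋-1} 1_A(θ^{-jM} ω)}`. -/
theorem contraction_proposition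
    (P : Measure (ℤ → 𝒴)) [IsProbabilityMeasure P]
    (herg : Ergodic shift P)
    (R : 𝒴 → Kernel X X) [∀ y, IsMarkovKernel (R y)]
    (hRmeas : ∀ Γ : Set X, MeasurableSet Γ →
      Measurable fun q : 𝒴 × X => R q.1 q.2 Γ)
    (nD : (ℤ → 𝒴) → ℕ) (γ : (ℤ → 𝒴) → ℝ) (m : (ℤ → 𝒴) → Measure X)
    (hnD : Measurable nD) (hγ : Measurable γ)
    (hγ01 : ∀ ω, γ ω ∈ Set.Ioo (0 : ℝ) 1)
    (hmprob : ∀ ω, IsProbabilityMeasure (m ω))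
    (hmmeas : ∀ Γ : Set X, MeasurableSet Γ → Measurable fun ω => m ω Γ)
    (hDoeb : Doeblin P R nD γ m)
    (δ : ℝ) (hδ : δ ∈ Set.Ioo (0 : ℝ) 1) (M : ℕ) (hM : 1 ≤ M) :
    ∀ᵐ ω ∂P, ∃ μω : Measure X, IsProbabilityMeasure μω ∧
      ∀ n : ℕ, opDist (Rcomp R n (shiftBack n ω)) μω ≤
        2 * (1 - δ) ^
          (((Finset.Icc 1 (n / M - 1)).filter fun j =>
            δ ≤ γ (shiftBack (j * M) ω) ∧ nD (shiftBack (j * M) ω) ≤ M).card) :=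
  contraction_proposition_general P herg R nD γ m hmprob hDoeb δ hδ M

end
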